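/- arXiv:2004.07774 — 4 statements merged into one kernel-verified Lean document; each statement's English description precedes it below -/
import Mathlib

section
/- Let K be a differential field. Elements a₁, …, aₙ ∈ K are linearly dependent over the field of constants Const(K) if and only if the Wronskian determinant det(Wrn(a₁, …, aₙ)) = 0, where Wrn(a₁, …, aₙ) is the n×n matrix whose (i,j) entry is δ^{i-1}(aⱼ). -/
/-!
A linear relation with constant coefficients survives differentiation, so it is a kernel vector
of the Wronskian matrix. Conversely, induct on `n`; the new case is that the Wronskian of
`a₁, …, aₙ` is invertible. Then a kernel vector `c` of the Wronskian of `a₁, …, aₙ₊₁` has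
`cₙ₊₁ ≠ 0`, so we may take `cₙ₊₁ = 1`. Differentiating the first `n` equations and using the
next one shows that `δc` is again a solution of those `n` equations, with last entry `δ 1 = 0`;
invertibility then forces `δc = 0`.
-/

open Finset Matrix

namespace Derivation

variable {R A : Type*} [CommSemiring R] [CommRing A] [Algebra R A] (D : Derivation R A A)

def wronskian {n : ℕ} (a : Fin n → A) : Matrix (Fin n) (Fin n) A :=
  Matrix.of fun i j => D^[(i : ℕ)] (a j)

theorem wronskian_mulVec_eq_zero_iff {n : ℕ} (a c : Fin n → A) :
    D.wronskian a *ᵥ c = 0 ↔ ∀ k < n, ∑ j, c j * D^[k] (a j) = 0 := by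
  simp only [funext_iff, Matrix.mulVec, dotProduct, wronskian, Matrix.of_apply, Pi.zero_apply,
    mul_comm (c _)]
  exact ⟨fun h k hk => h ⟨k, hk⟩, fun h i => h i i.isLt⟩

theorem map_sum_mul_iterate {ι : Type*} [Fintype ι] (a c : ι → A) (k : ℕ) :
    D (∑ j, c j * D^[k] (a j)) = ∑ j, D (c j) * D^[k] (a j) + ∑ j, c j * D^[k + 1] (a j) := by
  simp only [map_sum, leibniz, smul_eq_mul, Function.iterate_succ_apply', ← sum_add_distrib]
  exact sum_congr rfl fun j _ => by ring

variable {D}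

theorem sum_mul_iterate_eq_zero_of_map_eq_zero {ι : Type*} [Fintype ι] {a c : ι → A}
    (hc : ∀ j, D (c j) = 0) (h : ∑ j, c j * a j = 0) (k : ℕ) :
    ∑ j, c j * D^[k] (a j) = 0 := by
  induction k with
  | zero => exact h
  | succ k ih =>
    have := D.map_sum_mul_iterate a c k
    rwa [ih, map_zero, eq_comm, sum_eq_zero fun j _ => by rw [hc, zero_mul], zero_add] at this

theorem sum_map_mul_iterate_eq_zero {ι : Type*} [Fintype ι] {a c : ι → A} {k : ℕ}
    (h : ∑ j, c j * D^[k] (a j) = 0) (h_succ : ∑ j, c j * D^[k + 1] (a j) = 0) :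
    ∑ j, D (c j) * D^[k] (a j) = 0 := by
  have := D.map_sum_mul_iterate a c k
  rwa [h, h_succ, map_zero, add_zero, eq_comm] at this

theorem wronskian_det_eq_zero_of_sum_mul_eq_zero [IsDomain A] {n : ℕ} {a c : Fin n → A}
    (hc : ∀ j, D (c j) = 0) (hc0 : c ≠ 0) (h : ∑ j, c j * a j = 0) :
    (D.wronskian a).det = 0 :=
  Matrix.exists_mulVec_eq_zero_iff.mp ⟨c, hc0, (D.wronskian_mulVec_eq_zero_iff a c).mpr
    fun k _ => sum_mul_iterate_eq_zero_of_map_eq_zero hc h k⟩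

variable {K : Type*} [Field K] [Algebra R K] {D : Derivation R K K}

theorem eq_zero_of_wronskian_init_det_ne_zero {n : ℕ} {a w : Fin (n + 1) → K}
    (hdet : (D.wronskian (Fin.init a)).det ≠ 0) (hlast : w (Fin.last n) = 0)
    (hw : ∀ k < n, ∑ j, w j * D^[k] (a j) = 0) : w = 0 := by
  have hinit : Fin.init w = 0 := eq_zero_of_mulVec_eq_zero hdet <|
    (D.wronskian_mulVec_eq_zero_iff _ _).mpr fun k hk => by
      simpa [Fin.init, Fin.sum_univ_castSucc, hlast] using hw k hk
  funext j
  induction j using Fin.lastCases with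
  | last => exact hlast
  | cast j => exact congrFun hinit j

theorem exists_map_eq_zero_of_wronskian_det_eq_zero {n : ℕ} {a : Fin n → K}
    (hdet : (D.wronskian a).det = 0) :
    ∃ c : Fin n → K, (∀ j, D (c j) = 0) ∧ c ≠ 0 ∧ ∑ j, c j * a j = 0 := by
  induction n with
  | zero => simp [wronskian] at hdet
  | succ n ih =>
    by_cases hinit : (D.wronskian (Fin.init a)).det = 0
    · obtain ⟨c, hc, hc0, h⟩ := ih hinit
      refine ⟨Fin.snoc c 0, fun j => ?_, fun h0 => hc0 ?_, ?_⟩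
      · induction j using Fin.lastCases <;> simp [hc]
      · funext j
        simpa using congrFun h0 j.castSucc
      · simpa [Fin.init, Fin.sum_univ_castSucc] using h
    obtain ⟨v, hv0, hv⟩ := exists_mulVec_eq_zero_iff.mpr hdet
    rw [wronskian_mulVec_eq_zero_iff] at hv
    have hvlast : v (Fin.last n) ≠ 0 := fun h0 =>
      hv0 (eq_zero_of_wronskian_init_det_ne_zero hinit h0 fun k hk => hv k (by omega))
    set c := (v (Fin.last n))⁻¹ • v
    have hclast : c (Fin.last n) = 1 := by simp [c, hvlast]
    have hc k (hk : k < n + 1) : ∑ j, c j * D^[k] (a j) = 0 := by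
      simp only [c, Pi.smul_apply, smul_eq_mul, mul_assoc, ← mul_sum, hv k hk, mul_zero]
    have hDc : (fun j => D (c j)) = 0 :=
      eq_zero_of_wronskian_init_det_ne_zero hinit (by simp [hclast])
        fun k hk => sum_map_mul_iterate_eq_zero (hc k (by omega)) (hc (k + 1) (by omega))
    exact ⟨c, congrFun hDc, fun h0 => by simpa [hclast] using congrFun h0 (Fin.last n),
      hc 0 n.succ_pos⟩

end Derivation

/-- In a differential field, elements `a₁, …, aₙ` are linearly dependent over the field of
constants iff the determinant of their Wronskian matrix vanishes. -/
theorem linearDependent_over_constants_iff_wronskian_det_eq_zero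
    {K : Type*} [Field K] (δ : K → K)
    (hadd : ∀ x y, δ (x + y) = δ x + δ y)
    (hmul : ∀ x y, δ (x * y) = δ x * y + x * δ y)
    (n : ℕ) (a : Fin n → K) :
    (∃ c : Fin n → K, (∀ i, δ (c i) = 0) ∧ c ≠ 0 ∧ ∑ i, c i * a i = 0) ↔
      (Matrix.of fun i j : Fin n => δ^[(i : ℕ)] (a j)).det = 0 := by
  let D : Derivation ℤ K K := .mk' (AddMonoidHom.mk' δ hadd).toIntLinearMap fun x y => by
    simp only [AddMonoidHom.coe_toIntLinearMap, AddMonoidHom.mk'_apply, smul_eq_mul, hmul]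
    ring
  constructor
  · rintro ⟨c, hc, hc0, h⟩
    exact Derivation.wronskian_det_eq_zero_of_sum_mul_eq_zero (D := D) hc hc0 h
  · exact Derivation.exists_map_eq_zero_of_wronskian_det_eq_zero (D := D)
end

section
/- Let x, a, b be indeterminates over ℂ. Then ℂ(a, b) ∩ ℂ(ax + b, x) = ℂ, where the intersection is taken inside the rational function field ℂ(a, b, x). -/
open MvPolynomial

/-- The rational function field ℂ(a,b,x) in three independent variables. -/
noncomputable abbrev K6 : Type := FractionRing (MvPolynomial (Fin 3) ℂ)

noncomputable def a6 : K6 := algebraMap (MvPolynomial (Fin 3) ℂ) K6 (X 0)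
noncomputable def b6 : K6 := algebraMap (MvPolynomial (Fin 3) ℂ) K6 (X 1)
noncomputable def x6 : K6 := algebraMap (MvPolynomial (Fin 3) ℂ) K6 (X 2)

/-- The constants ℂ inside ℂ(a,b,x). -/
noncomputable def C6 : Set K6 :=
  Set.range fun c : ℂ => algebraMap (MvPolynomial (Fin 3) ℂ) K6 (MvPolynomial.C c)

/-!
Every element of ℂ(a, b) is killed by `∂/∂x`, and every element of ℂ(ax + b, x) by
`D = ∂/∂a - x ∂/∂b`. An element killed by both is killed by `⁅D, ∂/∂x⁆ = ∂/∂b`, hence also by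
`∂/∂a = D + x ∂/∂b`, and a rational function with vanishing gradient is constant: writing it as a
reduced fraction `p / q`, each relation `∂p * q = p * ∂q` gives `q ∣ ∂q`, so `∂q = 0` by degree,
and then `∂p = 0`.
-/

namespace MvPolynomial

variable {R σ : Type*} [CommSemiring R]

theorem degreeOf_pderiv_lt {i : σ} {p : MvPolynomial σ R} (h : pderiv i p ≠ 0) :
    degreeOf i (pderiv i p) < degreeOf i p := by
  have succ_le : ∀ s ∈ (pderiv i p).support, s i + 1 ≤ degreeOf i p := fun s hs => by
    rw [mem_support_iff, coeff_pderiv] at hs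
    simpa using monomial_le_degreeOf i (mem_support_iff.mpr (left_ne_zero_of_mul hs))
  obtain ⟨s, hs⟩ := support_nonempty.mpr h
  rw [degreeOf_lt_iff (by linarith [succ_le s hs])]
  exact fun t ht => succ_le t ht

theorem pderiv_eq_zero_of_dvd [NoZeroDivisors R] {i : σ} {p : MvPolynomial σ R}
    (h : p ∣ pderiv i p) : pderiv i p = 0 := by
  by_contra hne
  obtain ⟨c, hc⟩ := h
  have hp : p ≠ 0 := left_ne_zero_of_mul (hc ▸ hne)
  have hc0 : c ≠ 0 := right_ne_zero_of_mul (hc ▸ hne)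
  have := degreeOf_pderiv_lt hne
  rw [hc, degreeOf_mul_eq hp hc0] at this
  omega

theorem eq_C_of_forall_pderiv_eq_zero [NoZeroDivisors R] [CharZero R]
    {p : MvPolynomial σ R} (h : ∀ i, pderiv i p = 0) : p = C (coeff 0 p) := by
  classical
  ext s
  rw [coeff_C]
  split_ifs with hs
  · rw [hs]
  obtain ⟨i, hi⟩ : ∃ i, s i ≠ 0 := by
    by_contra! h0
    exact hs (Finsupp.ext h0).symm
  have hsi : s - Finsupp.single i 1 + Finsupp.single i 1 = s :=
    tsub_add_cancel_of_le (Finsupp.single_le_iff.mpr (Nat.one_le_iff_ne_zero.mpr hi))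
  have := congrArg (coeff (s - Finsupp.single i 1)) (h i)
  rw [coeff_pderiv, hsi, coeff_zero] at this
  exact (mul_eq_zero.mp this).resolve_right (Nat.cast_add_one_ne_zero _)

end MvPolynomial

namespace Derivation

variable {A R : Type*} (K : Type*) [CommRing A] [CommRing R] [IsDomain R] [Algebra A R]
  [Field K] [Algebra R K] [IsFractionRing R K]

/-- The constants of the extension of `d` to the fraction field `K`, described without
constructing that extension: `p / q` is constant iff the Wronskian `d p * q - p * d q` vanishes. -/
def fractionConstants (d : Derivation A R R) : Subfield K where
  carrier := {z | ∃ p q : R, q ≠ 0 ∧ z * algebraMap R K q = algebraMap R K p ∧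
    d p * q = p * d q}
  one_mem' := ⟨1, 1, one_ne_zero, by simp, by simp⟩
  zero_mem' := ⟨0, 1, one_ne_zero, by simp, by simp⟩
  add_mem' := by
    rintro z w ⟨p, q, hq, hz, hd⟩ ⟨r, s, hs, hw, he⟩
    refine ⟨p * s + q * r, q * s, mul_ne_zero hq hs, ?_, ?_⟩
    · simp only [map_mul, map_add]
      linear_combination (algebraMap R K s) * hz + (algebraMap R K q) * hw
    · simp only [map_add, Derivation.leibniz, smul_eq_mul]
      linear_combination (s ^ 2) * hd + (q ^ 2) * he
  mul_mem' := by
    rintro z w ⟨p, q, hq, hz, hd⟩ ⟨r, s, hs, hw, he⟩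
    refine ⟨p * r, q * s, mul_ne_zero hq hs, ?_, ?_⟩
    · simp only [map_mul]
      linear_combination (w * algebraMap R K s) * hz + (algebraMap R K p) * hw
    · simp only [Derivation.leibniz, smul_eq_mul]
      linear_combination (r * s) * hd + (p * q) * he
  neg_mem' := by
    rintro z ⟨p, q, hq, hz, hd⟩
    refine ⟨-p, q, hq, ?_, ?_⟩
    · rw [map_neg]; linear_combination -hz
    · rw [map_neg]; linear_combination -hd
  inv_mem' := by
    rintro z ⟨p, q, hq, hz, hd⟩
    rcases eq_or_ne z 0 with rfl | hz0
    · exact ⟨0, 1, one_ne_zero, by simp, by simp⟩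
    have hp : p ≠ 0 := by
      rintro rfl
      exact mul_ne_zero hz0 (IsFractionRing.to_map_ne_zero_of_mem_nonZeroDivisors
        (mem_nonZeroDivisors_of_ne_zero hq)) (by simpa using hz)
    refine ⟨q, p, hp, ?_, by linear_combination -hd⟩
    rw [← hz, inv_mul_cancel_left₀ hz0]

variable {K}

theorem wronskian_eq_zero_of_mem_fractionConstants {d : Derivation A R R} {z : K}
    (hz : z ∈ fractionConstants K d) {p q : R}
    (h : z * algebraMap R K q = algebraMap R K p) : d p * q = p * d q := by
  obtain ⟨n, m, hm, hzm, hdm⟩ := hz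
  have cross : n * q = p * m := IsFractionRing.injective R K <| by
    simp only [map_mul]
    linear_combination (algebraMap R K m) * h - (algebraMap R K q) * hzm
  have cross' := congrArg d cross
  simp only [Derivation.leibniz, smul_eq_mul] at cross'
  rcases eq_or_ne p 0 with rfl | hp
  · simp
  refine mul_right_cancel₀ (pow_ne_zero 2 hm) ?_
  linear_combination (-(m * q)) * cross' + (d q * m + d m * q) * cross + (q ^ 2) * hdm

theorem algebraMap_mem_fractionConstants {d : Derivation A R R} {p : R} (hp : d p = 0) :
    algebraMap R K p ∈ fractionConstants K d :=
  ⟨p, 1, one_ne_zero, by simp, by simp [hp]⟩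

theorem fractionConstants_inf_le_add_smul (d e : Derivation A R R) (r : R) :
    fractionConstants K d ⊓ fractionConstants K e ≤ fractionConstants K (d + r • e) := by
  rintro z ⟨⟨p, q, hq, hz, hd⟩, he⟩
  have he' := wronskian_eq_zero_of_mem_fractionConstants he hz
  refine ⟨p, q, hq, hz, ?_⟩
  simp only [Derivation.add_apply, Derivation.smul_apply, smul_eq_mul]
  linear_combination hd + r * he'

theorem fractionConstants_inf_le_lie (d e : Derivation A R R) :
    fractionConstants K d ⊓ fractionConstants K e ≤ fractionConstants K ⁅d, e⁆ := by
  rintro z ⟨⟨p, q, hq, hz, hd⟩, he⟩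
  have he' := wronskian_eq_zero_of_mem_fractionConstants he hz
  refine ⟨p, q, hq, hz, ?_⟩
  have hd' := congrArg e hd
  have he'' := congrArg d he'
  simp only [Derivation.leibniz, smul_eq_mul] at hd' he''
  simp only [Derivation.commutator_apply]
  refine mul_right_cancel₀ hq ?_
  linear_combination q * he'' - q * hd' + 2 * e q * hd - 2 * d q * he'

end Derivation

open Derivation

theorem MvPolynomial.exists_algebraMap_C_eq_of_forall_mem_fractionConstants_pderiv
    {k σ K : Type*} [Field k] [CharZero k] [Field K] [Algebra (MvPolynomial σ k) K]
    [IsFractionRing (MvPolynomial σ k) K]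
    {z : K} (hz : ∀ i : σ, z ∈ fractionConstants K (pderiv i : Derivation k _ _)) :
    ∃ c : k, algebraMap (MvPolynomial σ k) K (C c) = z := by
  obtain ⟨n, ⟨m, hm⟩, hcop, rfl⟩ := IsFractionRing.exists_reduced_fraction (MvPolynomial σ k) z
  have hm0 : m ≠ 0 := nonZeroDivisors.ne_zero hm
  have wronskian i : pderiv i n * m = n * pderiv i m :=
    wronskian_eq_zero_of_mem_fractionConstants (hz i) (IsLocalization.mk'_spec _ _ _)
  have hdm i : pderiv i m = 0 := pderiv_eq_zero_of_dvd <|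
    hcop.symm.dvd_of_dvd_mul_left ⟨pderiv i n, by linear_combination -(wronskian i)⟩
  have hdn i : pderiv i n = 0 := by simpa [hdm i, hm0] using wronskian i
  rw [IsFractionRing.mk'_eq_div, Subtype.coe_mk, eq_C_of_forall_pderiv_eq_zero hdm,
    eq_C_of_forall_pderiv_eq_zero hdn]
  exact ⟨coeff 0 n / coeff 0 m, map_div₀ ((algebraMap (MvPolynomial σ k) K).comp C) _ _⟩

/-- ℂ(a, b) ∩ ℂ(ax + b, x) = ℂ inside ℂ(a, b, x). -/
theorem intersection_eq_constants :
    Subfield.closure (C6 ∪ {a6, b6}) ⊓ Subfield.closure (C6 ∪ {a6 * x6 + b6, x6}) =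
      Subfield.closure C6 := by
  refine le_antisymm (fun f ⟨hab, haxb⟩ => ?_)
    (le_inf (Subfield.closure_mono Set.subset_union_left)
      (Subfield.closure_mono Set.subset_union_left))
  let d : Fin 3 → Derivation ℂ (MvPolynomial (Fin 3) ℂ) (MvPolynomial (Fin 3) ℂ) := pderiv
  let D := d 0 - (X 2 : MvPolynomial (Fin 3) ℂ) • d 1
  have h2 : f ∈ fractionConstants K6 (d 2) := by
    refine Subfield.closure_le.mpr ?_ hab
    rintro _ (⟨c, rfl⟩ | rfl | rfl)
    · exact algebraMap_mem_fractionConstants (by simp [d])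
    · exact algebraMap_mem_fractionConstants (p := X 0) (by simp [d, pderiv_X])
    · exact algebraMap_mem_fractionConstants (p := X 1) (by simp [d, pderiv_X])
  have hD : f ∈ fractionConstants K6 D := by
    refine Subfield.closure_le.mpr ?_ haxb
    rintro _ (⟨c, rfl⟩ | rfl | rfl)
    · exact algebraMap_mem_fractionConstants (by simp [D, d])
    · rw [a6, b6, x6, ← map_mul, ← map_add]
      exact algebraMap_mem_fractionConstants (by simp [D, d, pderiv_X])
    · exact algebraMap_mem_fractionConstants (p := X 2) (by simp [D, d, pderiv_X])
  have h1 : f ∈ fractionConstants K6 (d 1) := by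
    have : ⁅D, d 2⁆ = d 1 := derivation_ext fun i => by
      fin_cases i <;> simp [D, d, Derivation.commutator_apply, pderiv_X]
    exact this ▸ fractionConstants_inf_le_lie _ _ ⟨hD, h2⟩
  have h0 : f ∈ fractionConstants K6 (d 0) := by
    have : D + (X 2 : MvPolynomial (Fin 3) ℂ) • d 1 = d 0 := sub_add_cancel _ _
    exact this ▸ fractionConstants_inf_le_add_smul _ _ _ ⟨hD, h1⟩
  obtain ⟨c, rfl⟩ := exists_algebraMap_C_eq_of_forall_mem_fractionConstants_pderiv (k := ℂ)
    (Fin.forall_fin_succ.mpr ⟨h0, Fin.forall_fin_two.mpr ⟨h1, h2⟩⟩)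
  exact Subfield.subset_closure ⟨c, rfl⟩
end

section
/- The map α on ℂ(k₁, k₂, ε_A, ε_B) determined by α(k₁) = k₂, α(k₂) = k₁, α(ε_A) = ε_A, α(ε_B) = ε_A + k₁(ε_B − ε_A)/k₂ is a field automorphism of ℂ(k₁, k₂, ε_A, ε_B) over ℂ, it is an involution, and it fixes ℂ(k₁ + k₂, k₁k₂, ε_A, ε_A k₂ + ε_B k₁) pointwise. -/
/-!
Inverting `k₁` and `k₂`, the substitution `k₁ ↦ k₂, k₂ ↦ k₁, ε_A ↦ ε_A, ε_B ↦ ε_A + k₁(ε_B − ε_A)/k₂`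
is an endomorphism of the ring `ℂ[k₁, k₂, ε_A, ε_B][1/(k₁k₂)]`. Applied twice it sends `ε_B − ε_A`
to `(k₁/k₂)(k₂/k₁)(ε_B − ε_A)`, so it is an involution, hence an automorphism, and it extends to
the fraction field `ℂ(k₁, k₂, ε_A, ε_B)`. The four generators of the subfield are visibly fixed.
-/

open MvPolynomial

noncomputable abbrev K8 : Type := FractionRing (MvPolynomial (Fin 4) ℂ)

noncomputable def k₁ : K8 := algebraMap (MvPolynomial (Fin 4) ℂ) K8 (X 0)
noncomputable def k₂ : K8 := algebraMap (MvPolynomial (Fin 4) ℂ) K8 (X 1)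
noncomputable def εA : K8 := algebraMap (MvPolynomial (Fin 4) ℂ) K8 (X 2)
noncomputable def εB : K8 := algebraMap (MvPolynomial (Fin 4) ℂ) K8 (X 3)

section Involutive

variable {R A : Type*} [CommSemiring R] [Semiring A] [Algebra R A]

def AlgEquiv.ofInvolutive (f : A →ₐ[R] A) (hf : f.comp f = AlgHom.id R A) : A ≃ₐ[R] A :=
  ofAlgHom f f hf hf

theorem AlgEquiv.ofInvolutive_symm (f : A →ₐ[R] A) (hf : f.comp f = AlgHom.id R A) :
    (ofInvolutive f hf).symm = ofInvolutive f hf :=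
  rfl

end Involutive

theorem IsFractionRing.algEquivOfAlgEquiv_trans_self {R A K : Type*} [CommSemiring R]
    [CommRing A] [CommRing K] [Algebra R A] [Algebra R K] [Algebra A K] [IsFractionRing A K]
    [IsScalarTower R A K] {e : A ≃ₐ[R] A} (he : e.symm = e) :
    (algEquivOfAlgEquiv e : K ≃ₐ[R] K).trans (algEquivOfAlgEquiv e) = AlgEquiv.refl := by
  conv_lhs => arg 2; rw [← he, ← algEquivOfAlgEquiv_symm]
  exact AlgEquiv.self_trans_symm _

theorem AlgEquiv.eq_self_of_mem_closure {F K : Type*} [CommSemiring F] [Field K] [Algebra F K]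
    (α : K ≃ₐ[F] K) {s : Set K} (hs : ∀ x ∈ s, α x = x) :
    ∀ x ∈ Subfield.closure (Set.range (algebraMap F K) ∪ s), α x = x := by
  suffices Subfield.closure (Set.range (algebraMap F K) ∪ s) ≤
      RingHom.eqLocusField (α : K →+* K) (RingHom.id K) from fun x hx => this hx
  rw [Subfield.closure_le]
  rintro _ (⟨c, rfl⟩ | hx)
  · exact α.commutes c
  · exact hs _ hx

theorem IsLocalization.Away.map_invSelf {R S : Type*} [CommSemiring R] [CommSemiring S]
    [Algebra R S] (x : R) [IsLocalization.Away x S] {g : S →+* S}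
    (hg : g (algebraMap R S x) = algebraMap R S x) : g (invSelf x) = invSelf x := by
  have h := congrArg g (mul_invSelf (S := S) x)
  rw [map_mul, hg, map_one] at h
  exact (algebraMap_isUnit x).mul_left_cancel (h.trans (mul_invSelf x).symm)

namespace SlowFast

abbrev A : Type := MvPolynomial (Fin 4) ℂ

abbrev B : Type := Localization.Away (X 0 * X 1 : A)

lemma X_mul_X_ne_zero : (X 0 * X 1 : A) ≠ 0 := mul_ne_zero (X_ne_zero _) (X_ne_zero _)

lemma powers_le_nonZeroDivisors : Submonoid.powers (X 0 * X 1 : A) ≤ nonZeroDivisors A :=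
  Submonoid.powers_le.2 (mem_nonZeroDivisors_of_ne_zero X_mul_X_ne_zero)

noncomputable instance : Algebra B K8 :=
  IsLocalization.localizationAlgebraOfSubmonoidLe B K8 _ _ powers_le_nonZeroDivisors

instance : IsScalarTower A B K8 :=
  IsLocalization.localization_isScalarTower_of_submonoid_le B K8 _ _ powers_le_nonZeroDivisors

instance : IsFractionRing B K8 :=
  IsFractionRing.isFractionRing_of_isDomain_of_isLocalization
    (Submonoid.powers (X 0 * X 1 : A)) B K8

instance : IsScalarTower ℂ B K8 :=
  .of_algebraMap_eq fun c => by
    rw [IsScalarTower.algebraMap_apply ℂ A B, ← IsScalarTower.algebraMap_apply A B K8,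
      ← IsScalarTower.algebraMap_apply ℂ A K8]

local notation "ι" => algebraMap A B

noncomputable def w : B := IsLocalization.Away.invSelf (X 0 * X 1 : A)

lemma X_mul_X_mul_w : ι (X 0) * ι (X 1) * w = 1 := by
  rw [← map_mul]; exact IsLocalization.Away.mul_invSelf _

-- `ι (X 0) * w` stands for `1 / k₂`.
noncomputable def substitution : A →ₐ[ℂ] B :=
  aeval ![ι (X 1), ι (X 0), ι (X 2), ι (X 2) + ι (X 0) * (ι (X 3) - ι (X 2)) * (ι (X 0) * w)]

lemma substitution_X_mul_X : substitution (X 0 * X 1) = ι (X 0 * X 1) := by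
  simp [substitution, mul_comm]

lemma isUnit_substitution_X_mul_X : IsUnit (substitution (X 0 * X 1)) := by
  rw [substitution_X_mul_X]; exact IsLocalization.Away.algebraMap_isUnit _

noncomputable def σ : B →ₐ[ℂ] B :=
  IsLocalization.Away.liftAlgHom (X 0 * X 1 : A) isUnit_substitution_X_mul_X

@[simp] lemma σ_algebraMap (p : A) : σ (ι p) = substitution p :=
  IsLocalization.Away.lift_eq _ isUnit_substitution_X_mul_X p

lemma σ_w : σ w = w :=
  IsLocalization.Away.map_invSelf (g := (σ : B →+* B)) _ <|
    (σ_algebraMap _).trans substitution_X_mul_X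

lemma σ_σ_algebraMap_X (i : Fin 4) : σ (σ (ι (X i))) = ι (X i) := by
  fin_cases i <;> simp only [Fin.zero_eta, Fin.mk_one, Fin.reduceFinMk, σ_algebraMap, substitution,
    aeval_X, Matrix.cons_val, map_add, map_mul, map_sub, add_sub_cancel_left, σ_w]
  linear_combination (ι (X 3) - ι (X 2)) * (ι (X 0) * ι (X 1) * w + 1) * X_mul_X_mul_w

lemma σ_comp_σ : σ.comp σ = AlgHom.id ℂ B := by
  ext i
  exact σ_σ_algebraMap_X i

noncomputable def α : K8 ≃ₐ[ℂ] K8 :=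
  IsFractionRing.algEquivOfAlgEquiv (AlgEquiv.ofInvolutive σ σ_comp_σ)

lemma α_trans_α : α.trans α = AlgEquiv.refl :=
  IsFractionRing.algEquivOfAlgEquiv_trans_self (AlgEquiv.ofInvolutive_symm _ _)

local notation "κ" => algebraMap B K8

lemma α_algebraMap (p : A) : α (algebraMap A K8 p) = κ (substitution p) := by
  rw [IsScalarTower.algebraMap_apply A B K8, α, IsFractionRing.algEquivOfAlgEquiv_algebraMap]
  exact congrArg κ (σ_algebraMap p)

lemma k₂_ne_zero : k₂ ≠ 0 :=
  (map_ne_zero_iff _ (IsFractionRing.injective A K8)).2 (X_ne_zero 1)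

lemma k₁_mul_k₂_mul_algebraMap_w : k₁ * k₂ * κ w = 1 := by
  rw [k₁, k₂, IsScalarTower.algebraMap_apply A B K8, IsScalarTower.algebraMap_apply A B K8,
    ← map_mul, ← map_mul, X_mul_X_mul_w, map_one]

lemma α_k₁ : α k₁ = k₂ := by
  simp [k₁, k₂, α_algebraMap, substitution, ← IsScalarTower.algebraMap_apply]

lemma α_k₂ : α k₂ = k₁ := by
  simp [k₁, k₂, α_algebraMap, substitution, ← IsScalarTower.algebraMap_apply]

lemma α_εA : α εA = εA := by
  simp [εA, α_algebraMap, substitution, ← IsScalarTower.algebraMap_apply]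

lemma α_εB : α εB = εA + k₁ * (εB - εA) / k₂ := by
  calc α εB = εA + k₁ * (εB - εA) * (k₁ * κ w) := by
        simp only [εB, α_algebraMap, substitution, aeval_X, Matrix.cons_val, map_add, map_mul,
          map_sub, ← IsScalarTower.algebraMap_apply]
        rfl
    _ = εA + k₁ * (εB - εA) / k₂ := by
        field_simp [k₂_ne_zero]
        linear_combination k₁ * (εB - εA) * k₁_mul_k₂_mul_algebraMap_w

lemma α_fixes_generators :
    ∀ x ∈ ({k₁ + k₂, k₁ * k₂, εA, εA * k₂ + εB * k₁} : Set K8), α x = x := by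
  simp only [Set.mem_insert_iff, Set.mem_singleton_iff, forall_eq_or_imp, forall_eq, map_add,
    map_mul, α_k₁, α_k₂, α_εA, α_εB]
  refine ⟨add_comm _ _, mul_comm _ _, trivial, ?_⟩
  field_simp [k₂_ne_zero]
  ring

end SlowFast

/-- The slow–fast ambiguity transformation is a field automorphism of
ℂ(k₁,k₂,ε_A,ε_B) over ℂ, is an involution, and fixes
ℂ(k₁+k₂, k₁k₂, ε_A, ε_Ak₂+ε_Bk₁) pointwise. -/
theorem slow_fast_automorphism :
    ∃ α : K8 ≃ₐ[ℂ] K8,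
      α k₁ = k₂ ∧ α k₂ = k₁ ∧ α εA = εA ∧
        α εB = εA + k₁ * (εB - εA) / k₂ ∧
      α.trans α = AlgEquiv.refl ∧
      ∀ x ∈ Subfield.closure
          ((Set.range (algebraMap ℂ K8)) ∪ {k₁ + k₂, k₁ * k₂, εA, εA * k₂ + εB * k₁}),
        α x = x := by
  exact ⟨SlowFast.α, SlowFast.α_k₁, SlowFast.α_k₂, SlowFast.α_εA, SlowFast.α_εB,
    SlowFast.α_trans_α, SlowFast.α.eq_self_of_mem_closure SlowFast.α_fixes_generators⟩
end

section
/- Let K be a differential field and p, q, r ∈ K with the 2×2 matrix [[p, q],[δp, δq]] singular but p, q not both zero. If additionally (r, s) ∈ K² satisfies [[p,q],[δp,δq]]·(r,s)ᵀ = 0 and the kernel of the Wronskian is one-dimensional over K, then (r, s) is a K-multiple of a vector with entries in Const(K). -/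
/-!
Applying `δ` to `p r + q s = 0` and subtracting the second kernel equation gives
`p δr + q δs = 0`. If `s ≠ 0` then `p ≠ 0`, and eliminating `q` between the two equations shows
that the Wronskian `s δr - r δs` vanishes, i.e. `r / s` is a constant; hence
`(r, s) = s • (r / s, 1)`, while `(r, 0) = r • (1, 0)`.
-/

namespace Derivation

def ofLeibniz {A : Type*} [CommRing A] (δ : A → A) (hadd : ∀ x y, δ (x + y) = δ x + δ y)
    (hmul : ∀ x y, δ (x * y) = δ x * y + x * δ y) : Derivation ℤ A A :=
  mk' (AddMonoidHom.mk' δ hadd).toIntLinearMap fun a b => by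
    simp [hmul, smul_eq_mul, add_comm, mul_comm]

variable {R A : Type*} [CommRing R] [CommRing A] [Algebra R A] (D : Derivation R A A)
  {p q r s : A}

theorem mul_apply_add_mul_apply_eq_zero (h₀ : p * r + q * s = 0)
    (h₁ : D p * r + D q * s = 0) : p * D r + q * D s = 0 := by
  have hD := congrArg D h₀
  simp only [map_add, leibniz, map_zero, smul_eq_mul] at hD
  linear_combination hD - h₁

theorem apply_mul_eq_mul_apply_of_mul_add_mul_eq_zero [IsDomain A] (hp : p ≠ 0)
    (h₀ : p * r + q * s = 0) (h₁ : D p * r + D q * s = 0) : D r * s = r * D s := by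
  have h₂ := D.mul_apply_add_mul_apply_eq_zero h₀ h₁
  refine mul_left_cancel₀ hp ?_
  linear_combination s * h₂ - D s * h₀

theorem apply_div_eq_zero_of_mul_add_mul_eq_zero {K : Type*} [Field K] [Algebra R K]
    (D : Derivation R K K) {p q r s : K} (hp : p ≠ 0)
    (h₀ : p * r + q * s = 0) (h₁ : D p * r + D q * s = 0) : D (r / s) = 0 := by
  rw [leibniz_div, smul_eq_mul, smul_eq_mul, smul_eq_mul, mul_comm s,
    D.apply_mul_eq_mul_apply_of_mul_add_mul_eq_zero hp h₀ h₁, sub_self, mul_zero]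

end Derivation

theorem wronskian_two_kernel_constant_general
    {K : Type*} [Field K] (δ : K → K)
    (hadd : ∀ x y, δ (x + y) = δ x + δ y)
    (hmul : ∀ x y, δ (x * y) = δ x * y + x * δ y)
    (p q r s : K)
    (hpq : ¬(p = 0 ∧ q = 0))
    (hker : (Matrix.of ![![p, q], ![δ p, δ q]]).mulVec ![r, s] = 0) :
    ∃ (c : K) (w : Fin 2 → K), (∀ i, δ (w i) = 0) ∧ ![r, s] = c • w := by
  let D := Derivation.ofLeibniz δ hadd hmul
  have hD : ∀ x, D x = δ x := fun _ => rfl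
  obtain ⟨h₀, h₁⟩ : p * r + q * s = 0 ∧ D p * r + D q * s = 0 := by
    simpa [funext_iff, Fin.forall_fin_two, mul_comm, hD] using hker
  by_cases hs : s = 0
  · refine ⟨r, ![1, 0], ?_, by simp [hs]⟩
    simp [Fin.forall_fin_two, ← hD]
  have hp : p ≠ 0 := by
    rintro rfl
    have hq : q ≠ 0 := fun hq => hpq ⟨rfl, hq⟩
    simp [hq, hs] at h₀
  refine ⟨s, ![r / s, 1], ?_, by simp [mul_div_cancel₀ r hs]⟩
  simpa [Fin.forall_fin_two, ← hD] using D.apply_div_eq_zero_of_mul_add_mul_eq_zero hp h₀ h₁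

/-- The 2×2 case of "kernels of Wronskians are defined over the constants": if the
Wronskian of `(p, q)` is singular with `(p, q) ≠ 0` and its kernel is one-dimensional over
`K`, then any kernel vector `(r, s)` is a `K`-multiple of a vector of constants. -/
theorem wronskian_two_kernel_constant
    {K : Type*} [Field K] (δ : K → K)
    (hadd : ∀ x y, δ (x + y) = δ x + δ y)
    (hmul : ∀ x y, δ (x * y) = δ x * y + x * δ y)
    (p q r s : K)
    (hsing : (Matrix.of ![![p, q], ![δ p, δ q]]).det = 0)
    (hpq : ¬(p = 0 ∧ q = 0))
    (hker : (Matrix.of ![![p, q], ![δ p, δ q]]).mulVec ![r, s] = 0)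
    (hdim : ∀ v₁ v₂ : Fin 2 → K,
      (Matrix.of ![![p, q], ![δ p, δ q]]).mulVec v₁ = 0 →
      (Matrix.of ![![p, q], ![δ p, δ q]]).mulVec v₂ = 0 →
      v₂ ≠ 0 → ∃ c : K, v₁ = c • v₂) :
    ∃ (c : K) (w : Fin 2 → K), (∀ i, δ (w i) = 0) ∧ ![r, s] = c • w :=
  wronskian_two_kernel_constant_general δ hadd hmul p q r s hpq hker
end
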